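/- In the Eisenberg–Noe model with central clearing, suppose x ∈ ℝ^{d+1} is such that the linear program P̃(x) is feasible. Then P̃(x) has an optimal solution p(x) ∈ ℝ^{d+1}_+ that is also a clearing payment vector, i.e., it satisfies p_i(x) = min{ ℓ_{i(d+1)} + ℓ_{i0} , x_i + p_{d+1}(x) ℓ_{(d+1)i} / Σ_{j=1}^d ℓ_{(d+1)j} } for i ∈ {1,…,d} and p_{d+1}(x) = min{ Σ_{i=1}^d ℓ_{(d+1)i} , x_{d+1} + Σ_{i=1}^d p_i(x) ℓ_{i(d+1)} / (ℓ_{i(d+1)} + ℓ_{i0}) }. Moreover, the optimal value of P̃(x) equals the objective value Σ_{i=1}^d ( ℓ_{i0}/(ℓ_{i0} + ℓ_{i(d+1)}) ) p_i(x) at any such solution. -/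

import Mathlib

open scoped ENNReal

noncomputable section

namespace EisenbergNoeCCP

/-- Net interbank liability `∑_{j=1}^d ℓ_{ij} − ∑_{j=1}^d ℓ_{ji}` of institution `i`
(institutions are the nodes `1,…,d`, encoded as `i.succ` for `i : Fin d`; node `0` is
society). -/
def net {d : ℕ} (ℓ : Fin (d + 1) → Fin (d + 1) → ℝ) (i : Fin d) : ℝ :=
  ∑ j : Fin d, ℓ i.succ j.succ - ∑ j : Fin d, ℓ j.succ i.succ

/-- Liability `ℓ_{i(d+1)} = (∑ⱼ ℓ_{ij} − ∑ⱼ ℓ_{ji})⁺` of institution `i` to the CCP. -/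
def toCCP {d : ℕ} (ℓ : Fin (d + 1) → Fin (d + 1) → ℝ) (i : Fin d) : ℝ :=
  max (net ℓ i) 0

/-- Liability `ℓ_{(d+1)i} = (∑ⱼ ℓ_{ij} − ∑ⱼ ℓ_{ji})⁻` of the CCP to institution `i`. -/
def fromCCP {d : ℕ} (ℓ : Fin (d + 1) → Fin (d + 1) → ℝ) (i : Fin d) : ℝ :=
  max (-net ℓ i) 0

/-- Feasibility for the linear program `P̃(x)` of the Eisenberg–Noe model with central
clearing; the state is `(x, xC) ∈ ℝ^{d+1}` and the payment vector is `(p, pC)`,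
where the last coordinate belongs to the CCP (node `d+1`). -/
def Feasible {d : ℕ} (ℓ : Fin (d + 1) → Fin (d + 1) → ℝ) (x : Fin d → ℝ) (xC : ℝ)
    (p : Fin d → ℝ) (pC : ℝ) : Prop :=
  (∀ i, p i ≤ x i + (fromCCP ℓ i / ∑ j, fromCCP ℓ j) * pC) ∧
    pC ≤ xC + ∑ i, (toCCP ℓ i / (toCCP ℓ i + ℓ i.succ 0)) * p i ∧
    (∀ i, 0 ≤ p i ∧ p i ≤ toCCP ℓ i + ℓ i.succ 0) ∧
    0 ≤ pC ∧ pC ≤ ∑ i, fromCCP ℓ i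

/-- The objective `∑_{i=1}^d (ℓ_{i0}/(ℓ_{i0} + ℓ_{i(d+1)})) pᵢ` of `P̃(x)`. -/
def obj {d : ℕ} (ℓ : Fin (d + 1) → Fin (d + 1) → ℝ) (p : Fin d → ℝ) : ℝ :=
  ∑ i, (ℓ i.succ 0 / (ℓ i.succ 0 + toCCP ℓ i)) * p i

/-- The clearing fixed-point equations of the Eisenberg–Noe model with central
clearing. -/
def Clearing {d : ℕ} (ℓ : Fin (d + 1) → Fin (d + 1) → ℝ) (x : Fin d → ℝ) (xC : ℝ)
    (p : Fin d → ℝ) (pC : ℝ) : Prop :=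
  (∀ i, p i = min (toCCP ℓ i + ℓ i.succ 0)
      (x i + pC * (fromCCP ℓ i / ∑ j, fromCCP ℓ j))) ∧
    pC = min (∑ i, fromCCP ℓ i)
      (xC + ∑ i, p i * (toCCP ℓ i / (toCCP ℓ i + ℓ i.succ 0)))

end EisenbergNoeCCP

/-!
The feasible set of `P̃(x)` is `{q | 0 ≤ q ≤ Φ q}` for the monotone clearing map
`Φ q = min(capacities, x + (relative liabilities) q)`. Its supremum `P` (which exists since the
set is nonempty and bounded by the capacities) is feasible, because `q ≤ Φ q ≤ Φ P` for every
feasible `q`; then `Φ P` is feasible as well, so `Φ P ≤ P` and `P` is a clearing vector. The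
objective has nonnegative coefficients, so the greatest feasible point is optimal.
-/

open Function

section PostfixedPoints

variable {α : Type*} [PartialOrder α] {Φ : α → α} {a P : α}

theorem Monotone.isGreatest_of_isLUB_le_map (hΦ : Monotone Φ)
    (hne : {p | a ≤ p ∧ p ≤ Φ p}.Nonempty) (hP : IsLUB {p | a ≤ p ∧ p ≤ Φ p} P) :
    IsGreatest {p | a ≤ p ∧ p ≤ Φ p} P := by
  obtain ⟨q, hq⟩ := hne
  exact ⟨⟨hq.1.trans (hP.1 hq), hP.2 fun p hp => hp.2.trans (hΦ (hP.1 hp))⟩, hP.1⟩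

theorem Monotone.isFixedPt_of_isGreatest_le_map (hΦ : Monotone Φ)
    (hP : IsGreatest {p | a ≤ p ∧ p ≤ Φ p} P) : IsFixedPt Φ P :=
  le_antisymm (hP.2 ⟨hP.1.1.trans hP.1.2, hΦ hP.1.2⟩) hP.1.2

end PostfixedPoints

theorem Prod.exists_isLUB {α β : Type*} [ConditionallyCompleteLattice α]
    [ConditionallyCompleteLattice β] {s : Set (α × β)} (hne : s.Nonempty) (hbdd : BddAbove s) :
    ∃ P, IsLUB s P :=
  ⟨(sSup (Prod.fst '' s), sSup (Prod.snd '' s)),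
    isLUB_prod.2 ⟨isLUB_csSup (hne.image _) (monotone_fst.map_bddAbove hbdd),
      isLUB_csSup (hne.image _) (monotone_snd.map_bddAbove hbdd)⟩⟩

namespace EisenbergNoeCCP

variable {d : ℕ} (ℓ : Fin (d + 1) → Fin (d + 1) → ℝ) (x : Fin d → ℝ) (xC : ℝ)

theorem toCCP_nonneg (i : Fin d) : 0 ≤ toCCP ℓ i := le_max_right _ _

theorem fromCCP_nonneg (i : Fin d) : 0 ≤ fromCCP ℓ i := le_max_right _ _

/-- The CCP payment is the second component. -/
def clearingMap (q : (Fin d → ℝ) × ℝ) : (Fin d → ℝ) × ℝ :=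
  (fun i => min (toCCP ℓ i + ℓ i.succ 0) (x i + (fromCCP ℓ i / ∑ j, fromCCP ℓ j) * q.2),
    min (∑ i, fromCCP ℓ i) (xC + ∑ i, (toCCP ℓ i / (toCCP ℓ i + ℓ i.succ 0)) * q.1 i))

theorem feasible_iff_le_clearingMap (p : Fin d → ℝ) (pC : ℝ) :
    Feasible ℓ x xC p pC ↔ 0 ≤ (p, pC) ∧ (p, pC) ≤ clearingMap ℓ x xC (p, pC) := by
  simp only [Feasible, clearingMap, Prod.le_def, Pi.le_def, Prod.fst_zero, Prod.snd_zero,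
    Pi.zero_apply, le_min_iff]
  grind

theorem clearing_iff_isFixedPt (p : Fin d → ℝ) (pC : ℝ) :
    Clearing ℓ x xC p pC ↔ IsFixedPt (clearingMap ℓ x xC) (p, pC) := by
  simp only [Clearing, IsFixedPt, clearingMap, Prod.ext_iff, funext_iff, mul_comm, eq_comm]

theorem bddAbove_setOf_le_clearingMap :
    BddAbove {q | 0 ≤ q ∧ q ≤ clearingMap ℓ x xC q} :=
  ⟨(fun i => toCCP ℓ i + ℓ i.succ 0, ∑ i, fromCCP ℓ i), fun _ hq =>
    hq.2.trans ⟨fun _ => min_le_left _ _, min_le_left _ _⟩⟩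

variable {ℓ}

theorem monotone_clearingMap (h0 : ∀ i : Fin d, 0 ≤ ℓ i.succ 0) :
    Monotone (clearingMap ℓ x xC) := by
  intro q r hqr
  refine ⟨fun i => min_le_min_left _ ?_, min_le_min_left _ ?_⟩
  · have hw : 0 ≤ fromCCP ℓ i / ∑ j, fromCCP ℓ j :=
      div_nonneg (fromCCP_nonneg ℓ i) (Finset.sum_nonneg fun j _ => fromCCP_nonneg ℓ j)
    exact add_le_add_right (mul_le_mul_of_nonneg_left hqr.2 hw) _
  · refine add_le_add_right (Finset.sum_le_sum fun i _ => mul_le_mul_of_nonneg_left (hqr.1 i) ?_) _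
    exact div_nonneg (toCCP_nonneg ℓ i) (add_nonneg (toCCP_nonneg ℓ i) (h0 i))

theorem monotone_obj (h0 : ∀ i : Fin d, 0 ≤ ℓ i.succ 0) : Monotone (obj ℓ) := fun _ _ hpq =>
  Finset.sum_le_sum fun i _ =>
    mul_le_mul_of_nonneg_left (hpq i) (div_nonneg (h0 i) (add_nonneg (h0 i) (toCCP_nonneg ℓ i)))

theorem ccp_optimal_clearing_exists_general
    (d : ℕ) (ℓ : Fin (d + 1) → Fin (d + 1) → ℝ)
    (hto0 : ∀ i : Fin d, 0 < ℓ i.succ 0)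
    (x : Fin d → ℝ) (xC : ℝ)
    (hfeas : ∃ (p : Fin d → ℝ) (pC : ℝ), Feasible ℓ x xC p pC) :
    (∃ (p : Fin d → ℝ) (pC : ℝ), Feasible ℓ x xC p pC ∧
      (∀ (q : Fin d → ℝ) (qC : ℝ), Feasible ℓ x xC q qC → obj ℓ q ≤ obj ℓ p) ∧
      Clearing ℓ x xC p pC) ∧
    (∀ (p : Fin d → ℝ) (pC : ℝ), Feasible ℓ x xC p pC →
      (∀ (q : Fin d → ℝ) (qC : ℝ), Feasible ℓ x xC q qC → obj ℓ q ≤ obj ℓ p) →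
      Clearing ℓ x xC p pC →
      (⨆ (q : Fin d → ℝ) (qC : ℝ) (_ : Feasible ℓ x xC q qC),
          ((obj ℓ q : ℝ) : EReal)) = ((obj ℓ p : ℝ) : EReal)) := by
  have h0 : ∀ i : Fin d, 0 ≤ ℓ i.succ 0 := fun i => (hto0 i).le
  have hΦ := monotone_clearingMap x xC h0
  obtain ⟨q, qC, hq⟩ := hfeas
  have hne : {q | 0 ≤ q ∧ q ≤ clearingMap ℓ x xC q}.Nonempty :=
    ⟨(q, qC), (feasible_iff_le_clearingMap ℓ x xC q qC).1 hq⟩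
  obtain ⟨P, hP⟩ := Prod.exists_isLUB hne (bddAbove_setOf_le_clearingMap ℓ x xC)
  have hgreatest := hΦ.isGreatest_of_isLUB_le_map hne hP
  refine ⟨⟨P.1, P.2, (feasible_iff_le_clearingMap ℓ x xC _ _).2 hgreatest.1, ?_,
    (clearing_iff_isFixedPt ℓ x xC _ _).2 (hΦ.isFixedPt_of_isGreatest_le_map hgreatest)⟩, ?_⟩
  · exact fun r rC hr =>
      monotone_obj h0 (hgreatest.2 ((feasible_iff_le_clearingMap ℓ x xC r rC).1 hr)).1
  · intro p pC hp hopt _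
    refine le_antisymm (iSup₂_le fun r rC => iSup_le fun hr => ?_) ?_
    · exact EReal.coe_le_coe_iff.2 (hopt r rC hr)
    · exact le_iSup₂_of_le p pC (le_iSup_of_le hp le_rfl)

/-- In the Eisenberg–Noe model with central clearing, if `P̃(x)` is
feasible then it has an optimal solution which is also a clearing payment vector, and
the optimal value of `P̃(x)` equals the objective value at any such solution. -/
theorem ccp_optimal_clearing_exists
    (d : ℕ) (hd : 1 ≤ d) (ℓ : Fin (d + 1) → Fin (d + 1) → ℝ)
    (hℓnn : ∀ i j, 0 ≤ ℓ i j)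
    (hsoc : ∀ i : Fin d, ℓ 0 i.succ = 0)
    (hto0 : ∀ i : Fin d, 0 < ℓ i.succ 0)
    (hself : ∀ i, ℓ i i = 0)
    (hCCP : 0 < ∑ j, fromCCP ℓ j)
    (x : Fin d → ℝ) (xC : ℝ)
    (hfeas : ∃ (p : Fin d → ℝ) (pC : ℝ), Feasible ℓ x xC p pC) :
    (∃ (p : Fin d → ℝ) (pC : ℝ), Feasible ℓ x xC p pC ∧
      (∀ (q : Fin d → ℝ) (qC : ℝ), Feasible ℓ x xC q qC → obj ℓ q ≤ obj ℓ p) ∧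
      Clearing ℓ x xC p pC) ∧
    (∀ (p : Fin d → ℝ) (pC : ℝ), Feasible ℓ x xC p pC →
      (∀ (q : Fin d → ℝ) (qC : ℝ), Feasible ℓ x xC q qC → obj ℓ q ≤ obj ℓ p) →
      Clearing ℓ x xC p pC →
      (⨆ (q : Fin d → ℝ) (qC : ℝ) (_ : Feasible ℓ x xC q qC),
          ((obj ℓ q : ℝ) : EReal)) = ((obj ℓ p : ℝ) : EReal)) :=
  ccp_optimal_clearing_exists_general d ℓ hto0 x xC hfeas

end EisenbergNoeCCP
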